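/- Let n ∈ ℤ_{≥0}^r and assume that n is normal and that all neighbouring indices n + e_1,…,n + e_r and all n − e_j that lie in ℤ_{≥0}^r are normal. Then for every m = 1,…,r: z Λ_{n,m}(z) = −conj(β_n) Λ*_{n,m}(z) + Σ_{j=1}^r conj(ρ_{n,j}) Λ_{n+e_j,m}(z). -/

import Mathlib

open MeasureTheory Polynomial

noncomputable section

/-- A system of measures on the unit circle: each `μ j` is a probability measure,
carried by the unit circle `∂𝔻 = {z : |z| = 1}`, with infinite support. -/
def MopucSystem {r : ℕ} (μ : Fin r → Measure ℂ) : Prop :=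
  ∀ j, IsProbabilityMeasure (μ j) ∧ μ j ((Metric.sphere (0 : ℂ) 1)ᶜ) = 0 ∧
    ∀ s : Set ℂ, s.Finite → μ j (sᶜ) ≠ 0

/-- The inner product `⟨P, Q⟩_μ = ∫ P(z)·conj (Q(z)) dμ(z)`. -/
def pip (μ : Measure ℂ) (P Q : Polynomial ℂ) : ℂ :=
  ∫ z, P.eval z * (starRingEnd ℂ) (Q.eval z) ∂μ

/-- `⟨P, z^p⟩_μ`. -/
def mip (μ : Measure ℂ) (P : Polynomial ℂ) (p : ℕ) : ℂ :=
  pip μ P (X ^ p)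

/-- The moment `ν^p = ∫ z^p dμ(z)` for `p ∈ ℤ` (on the circle `z^{-m} = conj (z^m)`). -/
def mom (μ : Measure ℂ) (p : ℤ) : ℂ :=
  ∫ z, z ^ p ∂μ

/-- The linear position of the pair `(j, q)` (with `q < n j`): `(∑_{i<j} n i) + q`.
This enumerates the pairs, in lexicographic order, by `0, 1, …, |n| − 1`. -/
def linIdx {r : ℕ} (n : Fin r → ℕ) (c : (j : Fin r) × Fin (n j)) : ℕ :=
  (∑ i ∈ Finset.univ.filter (fun i => i < c.1), n i) + (c.2 : ℕ)

/-- The moment matrix `M_n`: rows are indexed by pairs `(j, q)` with `1 ≤ j ≤ r`,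
`0 ≤ q ≤ n j − 1`, columns by `p = 0, …, |n| − 1` (realized as pairs via the
order-preserving enumeration `linIdx`), and the entry at `((j,q), p)` is `ν_j^{p−q}`. -/
def Mmat {r : ℕ} (μ : Fin r → Measure ℂ) (n : Fin r → ℕ) :
    Matrix ((j : Fin r) × Fin (n j)) ((j : Fin r) × Fin (n j)) ℂ :=
  Matrix.of fun rq c => mom (μ rq.1) ((linIdx n c : ℤ) - ((rq.2 : ℕ) : ℤ))

/-- The index `n` is normal if `det M_n ≠ 0`.  (For `n = 0` the matrix is empty and its
determinant is `1`, so `n = 0` is normal, matching the convention of the paper.) -/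
def NormalIndex {r : ℕ} (μ : Fin r → Measure ℂ) (n : Fin r → ℕ) : Prop :=
  (Mmat μ n).det ≠ 0

/-- A type II multiple orthogonal polynomial for the multi-index `n`. -/
def IsTypeII {r : ℕ} (μ : Fin r → Measure ℂ) (n : Fin r → ℕ) (P : Polynomial ℂ) : Prop :=
  P ≠ 0 ∧ P.degree ≤ ((∑ j, n j : ℕ) : WithBot ℕ) ∧
    ∀ j, ∀ p : ℕ, p < n j → mip (μ j) P p = 0

/-- A type II* multiple orthogonal polynomial for the multi-index `n`. -/
def IsTypeIIStar {r : ℕ} (μ : Fin r → Measure ℂ) (n : Fin r → ℕ) (P : Polynomial ℂ) : Prop :=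
  P ≠ 0 ∧ P.degree ≤ ((∑ j, n j : ℕ) : WithBot ℕ) ∧
    ∀ j, ∀ p : ℕ, 1 ≤ p → p ≤ n j → mip (μ j) P p = 0

/-- A type I multiple orthogonal polynomial for the multi-index `n`:
a nonzero vector of polynomials with `deg (L j) ≤ n j − 1` (so `L j = 0` when `n j = 0`),
and `∑_j ⟨L j, z^p⟩_j = 0` for `p = 0, …, |n| − 2`. -/
def IsTypeI {r : ℕ} (μ : Fin r → Measure ℂ) (n : Fin r → ℕ) (L : Fin r → Polynomial ℂ) : Prop :=
  L ≠ 0 ∧ (∀ j, (L j).degree < ((n j : ℕ) : WithBot ℕ)) ∧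
    ∀ p : ℕ, p + 2 ≤ ∑ j, n j → ∑ j, mip (μ j) (L j) p = 0

/-- A type I* multiple orthogonal polynomial for the multi-index `n`:
a nonzero vector of polynomials with `deg (L j) ≤ n j − 1`,
and `∑_j ⟨L j, z^p⟩_j = 0` for `p = 1, …, |n| − 1`. -/
def IsTypeIStar {r : ℕ} (μ : Fin r → Measure ℂ) (n : Fin r → ℕ) (L : Fin r → Polynomial ℂ) : Prop :=
  L ≠ 0 ∧ (∀ j, (L j).degree < ((n j : ℕ) : WithBot ℕ)) ∧
    ∀ p : ℕ, 1 ≤ p → p + 1 ≤ ∑ j, n j → ∑ j, mip (μ j) (L j) p = 0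

/-- `Φ_n`: the monic type II polynomial of degree exactly `|n|`. -/
def IsPhi {r : ℕ} (μ : Fin r → Measure ℂ) (n : Fin r → ℕ) (P : Polynomial ℂ) : Prop :=
  IsTypeII μ n P ∧ P.Monic ∧ P.natDegree = ∑ j, n j

/-- `Φ*_n`: the type II* polynomial with `Φ*_n(0) = 1`. -/
def IsPhiStar {r : ℕ} (μ : Fin r → Measure ℂ) (n : Fin r → ℕ) (P : Polynomial ℂ) : Prop :=
  IsTypeIIStar μ n P ∧ P.eval 0 = 1

/-- `Λ_n`: the type I vector normalized by `∑_j ⟨Λ_{n,j}, z^{|n|−1}⟩_j = 1`. -/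
def IsLambda {r : ℕ} (μ : Fin r → Measure ℂ) (n : Fin r → ℕ) (L : Fin r → Polynomial ℂ) : Prop :=
  IsTypeI μ n L ∧ ∑ j, mip (μ j) (L j) ((∑ i, n i) - 1) = 1

/-- `Λ*_n`: the type I* vector normalized by `∑_j ⟨Λ*_{n,j}, 1⟩_j = 1`. -/
def IsLambdaStar {r : ℕ} (μ : Fin r → Measure ℂ) (n : Fin r → ℕ) (L : Fin r → Polynomial ℂ) : Prop :=
  IsTypeIStar μ n L ∧ ∑ j, mip (μ j) (L j) 0 = 1

/-- The multi-index `n + e_k`. -/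
def eAdd {r : ℕ} (n : Fin r → ℕ) (k : Fin r) : Fin r → ℕ :=
  Function.update n k (n k + 1)

/-- The multi-index `n − e_k` (used only when `n k ≥ 1`). -/
def eSub {r : ℕ} (n : Fin r → ℕ) (k : Fin r) : Fin r → ℕ :=
  Function.update n k (n k - 1)

section MeasureLemmas

open scoped ComplexConjugate

lemma ae_norm_one {μ : Measure ℂ} (h : μ ((Metric.sphere (0 : ℂ) 1)ᶜ) = 0) :
    ∀ᵐ z ∂μ, ‖z‖ = 1 := by
  have h2 : ∀ᵐ z ∂μ, z ∈ Metric.sphere (0:ℂ) 1 := by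
    rw [MeasureTheory.ae_iff]
    exact h
  filter_upwards [h2] with z hz
  simpa using hz

lemma eval_norm_le (P : Polynomial ℂ) {z : ℂ} (hz : ‖z‖ = 1) :
    ‖P.eval z‖ ≤ ∑ q ∈ Finset.range (P.natDegree + 1), ‖P.coeff q‖ := by
  rw [Polynomial.eval_eq_sum_range]
  refine (norm_sum_le _ _).trans ?_
  refine Finset.sum_le_sum fun q hq => ?_
  rw [norm_mul, norm_pow, hz, one_pow, mul_one]

lemma integrable_pm {μ : Measure ℂ} (hp : IsProbabilityMeasure μ)
    (h1 : ∀ᵐ z ∂μ, ‖z‖ = 1) (P Q : Polynomial ℂ) :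
    Integrable (fun z => P.eval z * (starRingEnd ℂ) (Q.eval z)) μ := by
  refine Integrable.mono'
    (integrable_const ((∑ q ∈ Finset.range (P.natDegree + 1), ‖P.coeff q‖) *
      (∑ q ∈ Finset.range (Q.natDegree + 1), ‖Q.coeff q‖))) ?_ ?_
  · exact (P.continuous.mul (continuous_star.comp Q.continuous)).aestronglyMeasurable
  · filter_upwards [h1] with z hz
    rw [norm_mul]
    have : ‖(starRingEnd ℂ) (Q.eval z)‖ = ‖Q.eval z‖ := RCLike.norm_conj _
    rw [this]
    exact mul_le_mul (eval_norm_le P hz) (eval_norm_le Q hz) (norm_nonneg _)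
      (Finset.sum_nonneg fun _ _ => norm_nonneg _)

lemma conj_eq_inv {z : ℂ} (hz : ‖z‖ = 1) : (starRingEnd ℂ) z = z⁻¹ := by
  have h1 : z * (starRingEnd ℂ) z = 1 := by
    rw [Complex.mul_conj]
    norm_cast
    rw [Complex.normSq_eq_norm_sq, hz]; norm_num
  field_simp [show z ≠ 0 by intro h; rw [h] at hz; simp at hz] at h1 ⊢
  linear_combination h1

lemma mip_monomial {μ : Measure ℂ} (h1 : ∀ᵐ z ∂μ, ‖z‖ = 1) (q p : ℕ) :
    mip μ (X ^ q) p = mom μ ((q : ℤ) - p) := by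
  unfold mip pip mom
  refine integral_congr_ae ?_
  filter_upwards [h1] with z hz
  have hz0 : z ≠ 0 := by intro h; rw [h] at hz; simp at hz
  simp only [Polynomial.eval_pow, Polynomial.eval_X]
  rw [map_pow, conj_eq_inv hz, inv_pow, ← zpow_natCast z q, ← zpow_natCast z p,
    ← zpow_neg, ← zpow_add₀ hz0, sub_eq_add_neg]

lemma conj_mom {μ : Measure ℂ} (h1 : ∀ᵐ z ∂μ, ‖z‖ = 1) (k : ℤ) :
    (starRingEnd ℂ) (mom μ k) = mom μ (-k) := by
  unfold mom
  rw [← integral_conj]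
  refine integral_congr_ae ?_
  filter_upwards [h1] with z hz
  have hz0 : z ≠ 0 := by intro h; rw [h] at hz; simp at hz
  rw [map_zpow₀, conj_eq_inv hz, inv_zpow, ← zpow_neg]

end MeasureLemmas
section ExpandLemmas

lemma mip_zero (μ : Measure ℂ) (p : ℕ) : mip μ 0 p = 0 := by
  simp [mip, pip]

lemma mip_expand {μ : Measure ℂ} (hp : IsProbabilityMeasure μ)
    (h1 : ∀ᵐ z ∂μ, ‖z‖ = 1) (P : Polynomial ℂ) {N : ℕ}
    (hd : P.degree < (N : WithBot ℕ)) (p : ℕ) :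
    mip μ P p = ∑ q ∈ Finset.range N, P.coeff q * mom μ ((q : ℤ) - p) := by
  by_cases hP : P = 0
  · subst hP; simp [mip_zero]
  have hnd : P.natDegree < N := (Polynomial.natDegree_lt_iff_degree_lt hP).mpr hd
  have step1 : mip μ P p
      = ∫ z, ∑ q ∈ Finset.range N, P.coeff q * ((X ^ q : Polynomial ℂ).eval z *
          (starRingEnd ℂ) ((X ^ p : Polynomial ℂ).eval z)) ∂μ := by
    unfold mip pip
    refine integral_congr_ae (Filter.Eventually.of_forall fun z => ?_)
    beta_reduce
    rw [Polynomial.eval_eq_sum_range' hnd, Finset.sum_mul]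
    simp [mul_assoc]
  rw [step1, MeasureTheory.integral_finset_sum _
    (fun q _ => (integrable_pm hp h1 (X ^ q) (X ^ p)).const_mul _)]
  refine Finset.sum_congr rfl fun q _ => ?_
  rw [MeasureTheory.integral_const_mul]
  congr 1
  exact mip_monomial h1 q p

lemma pip_expand_right {μ : Measure ℂ} (hp : IsProbabilityMeasure μ)
    (h1 : ∀ᵐ z ∂μ, ‖z‖ = 1) (P Q : Polynomial ℂ) {N : ℕ}
    (hd : Q.degree < (N : WithBot ℕ)) :
    pip μ P Q = ∑ q ∈ Finset.range N, (starRingEnd ℂ) (Q.coeff q) * mip μ P q := by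
  by_cases hQ : Q = 0
  · subst hQ; simp [pip]
  have hnd : Q.natDegree < N := (Polynomial.natDegree_lt_iff_degree_lt hQ).mpr hd
  have step1 : pip μ P Q
      = ∫ z, ∑ q ∈ Finset.range N, (starRingEnd ℂ) (Q.coeff q) * (P.eval z *
          (starRingEnd ℂ) ((X ^ q : Polynomial ℂ).eval z)) ∂μ := by
    unfold pip
    refine integral_congr_ae (Filter.Eventually.of_forall fun z => ?_)
    beta_reduce
    rw [Polynomial.eval_eq_sum_range' hnd (x := z), map_sum, Finset.mul_sum]
    refine Finset.sum_congr rfl fun q _ => ?_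
    simp [map_mul]; ring
  rw [step1, MeasureTheory.integral_finset_sum _
    (fun q _ => (integrable_pm hp h1 P (X ^ q)).const_mul _)]
  refine Finset.sum_congr rfl fun q _ => ?_
  rw [MeasureTheory.integral_const_mul]
  rfl

lemma pip_conj (μ : Measure ℂ) (P Q : Polynomial ℂ) :
    pip μ P Q = (starRingEnd ℂ) (pip μ Q P) := by
  unfold pip
  rw [← integral_conj]
  refine integral_congr_ae (Filter.Eventually.of_forall fun z => ?_)
  simp [map_mul, mul_comm]

lemma pip_expand_left {μ : Measure ℂ} (hp : IsProbabilityMeasure μ)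
    (h1 : ∀ᵐ z ∂μ, ‖z‖ = 1) (P Q : Polynomial ℂ) {N : ℕ}
    (hd : P.degree < (N : WithBot ℕ)) :
    pip μ P Q = ∑ p ∈ Finset.range N, P.coeff p * (starRingEnd ℂ) (mip μ Q p) := by
  rw [pip_conj, pip_expand_right hp h1 Q P hd, map_sum]
  refine Finset.sum_congr rfl fun p _ => ?_
  rw [map_mul, Complex.conj_conj]

lemma mip_add {μ : Measure ℂ} (hp : IsProbabilityMeasure μ)
    (h1 : ∀ᵐ z ∂μ, ‖z‖ = 1) (P Q : Polynomial ℂ) (p : ℕ) :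
    mip μ (P + Q) p = mip μ P p + mip μ Q p := by
  unfold mip pip
  rw [← MeasureTheory.integral_add (integrable_pm hp h1 P (X ^ p))
    (integrable_pm hp h1 Q (X ^ p))]
  refine integral_congr_ae (Filter.Eventually.of_forall fun z => ?_)
  simp [add_mul]

lemma mip_sub {μ : Measure ℂ} (hp : IsProbabilityMeasure μ)
    (h1 : ∀ᵐ z ∂μ, ‖z‖ = 1) (P Q : Polynomial ℂ) (p : ℕ) :
    mip μ (P - Q) p = mip μ P p - mip μ Q p := by
  unfold mip pip
  rw [← MeasureTheory.integral_sub (integrable_pm hp h1 P (X ^ p))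
    (integrable_pm hp h1 Q (X ^ p))]
  refine integral_congr_ae (Filter.Eventually.of_forall fun z => ?_)
  simp [sub_mul]

lemma mip_Cmul {μ : Measure ℂ} (c : ℂ) (P : Polynomial ℂ) (p : ℕ) :
    mip μ (Polynomial.C c * P) p = c * mip μ P p := by
  unfold mip pip
  rw [← MeasureTheory.integral_const_mul]
  refine integral_congr_ae (Filter.Eventually.of_forall fun z => ?_)
  simp [mul_assoc]

lemma mip_sum {μ : Measure ℂ} (hp : IsProbabilityMeasure μ)
    (h1 : ∀ᵐ z ∂μ, ‖z‖ = 1) {ι : Type*} (s : Finset ι) (F : ι → Polynomial ℂ) (p : ℕ) :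
    mip μ (∑ j ∈ s, F j) p = ∑ j ∈ s, mip μ (F j) p := by
  classical
  induction s using Finset.induction with
  | empty => simp [mip_zero]
  | insert _ _ h ih =>
    rw [Finset.sum_insert h, Finset.sum_insert h, mip_add hp h1, ih]

lemma mip_X_mul {μ : Measure ℂ} (h1 : ∀ᵐ z ∂μ, ‖z‖ = 1) (P : Polynomial ℂ) (p : ℕ) :
    mip μ (Polynomial.X * P) (p + 1) = mip μ P p := by
  unfold mip pip
  refine integral_congr_ae ?_
  filter_upwards [h1] with z hz
  have hone : z * (starRingEnd ℂ) z = 1 := by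
    rw [conj_eq_inv hz, mul_inv_cancel₀ (by intro h; rw [h] at hz; simp at hz)]
  simp only [Polynomial.eval_mul, Polynomial.eval_pow, Polynomial.eval_X, pow_succ, map_mul]
  calc z * P.eval z * ((starRingEnd ℂ) (z ^ p) * (starRingEnd ℂ) z)
      = (z * (starRingEnd ℂ) z) * (P.eval z * (starRingEnd ℂ) (z ^ p)) := by ring
    _ = P.eval z * (starRingEnd ℂ) (z ^ p) := by rw [hone, one_mul]

end ExpandLemmas
section Uniqueness

lemma linIdx_lt {r : ℕ} (n : Fin r → ℕ) (c : (j : Fin r) × Fin (n j)) :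
    linIdx n c < ∑ j, n j := by
  unfold linIdx
  have hsub : (∑ i ∈ Finset.univ.filter (fun i => i < c.1), n i) + n c.1 ≤ ∑ i, n i := by
    have hins : (∑ i ∈ insert c.1 (Finset.univ.filter (fun i => i < c.1)), n i)
        = (∑ i ∈ Finset.univ.filter (fun i => i < c.1), n i) + n c.1 := by
      rw [Finset.sum_insert (by simp)]
      ring
    rw [← hins]
    exact Finset.sum_le_sum_of_subset (Finset.subset_univ _)
  have := c.2.2
  omega

lemma type_zero {r : ℕ} {μ : Fin r → Measure ℂ} (hμ : MopucSystem μ) (N : Fin r → ℕ)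
    (hN : NormalIndex μ N) (L : Fin r → Polynomial ℂ)
    (hdeg : ∀ j, (L j).degree < ((N j : ℕ) : WithBot ℕ))
    (hmom : ∀ p : ℕ, p < ∑ j, N j → ∑ j, mip (μ j) (L j) p = 0) :
    ∀ j, L j = 0 := by
  classical
  set M := Mmat μ N with hM
  set c : ((j : Fin r) × Fin (N j)) → ℂ := fun x => (starRingEnd ℂ) ((L x.1).coeff x.2)
    with hc
  have hvec : Matrix.vecMul c M = 0 := by
    funext col
    have hp := hmom (linIdx N col) (linIdx_lt N col)
    have hconj : (∑ j, (starRingEnd ℂ) (mip (μ j) (L j) (linIdx N col))) = 0 := by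
      rw [← map_sum, hp, map_zero]
    have hexp : ∀ j, (starRingEnd ℂ) (mip (μ j) (L j) (linIdx N col))
        = ∑ q : Fin (N j), c ⟨j, q⟩ * M ⟨j, q⟩ col := by
      intro j
      rw [mip_expand (hμ j).1 (ae_norm_one (hμ j).2.1) (L j) (hdeg j), map_sum]
      rw [Finset.sum_range fun q => (starRingEnd ℂ) ((L j).coeff q * mom (μ j) (q - linIdx N col))]
      refine Finset.sum_congr rfl fun q _ => ?_
      rw [map_mul]
      congr 1
      rw [conj_mom (ae_norm_one (hμ j).2.1), hM]
      simp only [Mmat, Matrix.of_apply]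
      congr 1
      ring
    simp only [Matrix.vecMul, dotProduct]
    rw [show (0 : (j : Fin r) × Fin (N j) → ℂ) col = 0 from rfl]
    rw [← hconj]
    rw [← Finset.univ_sigma_univ, Finset.sum_sigma]
    exact Finset.sum_congr rfl fun j _ => (hexp j).symm
  have hcz : c = 0 := by
    have hu : IsUnit M.det := isUnit_iff_ne_zero.mpr hN
    have hMinv : M * M⁻¹ = 1 := Matrix.mul_nonsing_inv M hu
    calc c = Matrix.vecMul c (M * M⁻¹) := by rw [hMinv, Matrix.vecMul_one]
      _ = Matrix.vecMul (Matrix.vecMul c M) M⁻¹ := by rw [Matrix.vecMul_vecMul]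
      _ = 0 := by rw [hvec, Matrix.zero_vecMul]
  intro j
  ext q
  rcases lt_or_ge q (N j) with hq | hq
  · have := congrFun hcz ⟨j, ⟨q, hq⟩⟩
    simp only [hc, Pi.zero_apply] at this
    simpa using congrArg (starRingEnd ℂ) this
  · simp only [Polynomial.coeff_zero]
    exact Polynomial.coeff_eq_zero_of_degree_lt
      (lt_of_lt_of_le (hdeg j) (by exact_mod_cast hq))

lemma sum_eAdd {r : ℕ} (n : Fin r → ℕ) (k : Fin r) :
    (∑ j, eAdd n k j) = (∑ j, n j) + 1 := by
  classical
  unfold eAdd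
  rw [Finset.sum_update_of_mem (Finset.mem_univ k), ← Finset.erase_eq]
  have := Finset.add_sum_erase Finset.univ n (Finset.mem_univ k)
  omega

lemma sum_eSub {r : ℕ} (n : Fin r → ℕ) (k : Fin r) (h : n k ≠ 0) :
    (∑ j, eSub n k j) + 1 = ∑ j, n j := by
  classical
  unfold eSub
  rw [Finset.sum_update_of_mem (Finset.mem_univ k), ← Finset.erase_eq]
  have := Finset.add_sum_erase Finset.univ n (Finset.mem_univ k)
  omega

end Uniqueness
section DegHelpers

lemma coeff_zero_of_deg_lt {P : Polynomial ℂ} {N q : ℕ}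
    (h : P.degree < (N : WithBot ℕ)) (hq : N ≤ q) : P.coeff q = 0 :=
  Polynomial.coeff_eq_zero_of_degree_lt (lt_of_lt_of_le h (by exact_mod_cast hq))

lemma degree_X_mul_lt {P : Polynomial ℂ} {N : ℕ} (h : P.degree < (N : WithBot ℕ)) :
    (Polynomial.X * P).degree < ((N + 1 : ℕ) : WithBot ℕ) := by
  rw [Polynomial.degree_lt_iff_coeff_zero] at *
  intro q hq
  have hq' : (N + 1 : ℕ) ≤ q := by exact_mod_cast hq
  obtain ⟨q', rfl⟩ : ∃ q', q = q' + 1 := ⟨q - 1, by omega⟩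
  rw [Polynomial.coeff_X_mul]
  exact h q' (by exact_mod_cast (show N ≤ q' by omega))

end DegHelpers
/-- if `n` is normal along with all neighbours `n ± e_j` in the grid, then
for every `m`: `z Λ_{n,m} = −conj(β_n) Λ*_{n,m} + ∑_j conj(ρ_{n,j}) Λ_{n+e_j,m}`. -/
theorem szego_recurrence_typeI (r : ℕ) (hr : 0 < r) (μ : Fin r → Measure ℂ)
    (hμ : MopucSystem μ) (n : Fin r → ℕ)
    (hnorm : NormalIndex μ n)
    (hplus : ∀ j, NormalIndex μ (eAdd n j))
    (hminus : ∀ j, n j ≠ 0 → NormalIndex μ (eSub n j))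
    (Φ : Polynomial ℂ) (hΦ : IsPhi μ n Φ)
    (Φs : Polynomial ℂ) (hΦs : IsPhiStar μ n Φs)
    (Φ' : Fin r → Polynomial ℂ)
    (hΦ' : ∀ j, (n j = 0 → Φ' j = 0) ∧ (n j ≠ 0 → IsPhi μ (eSub n j) (Φ' j)))
    (ρ : Fin r → ℂ) (hρ0 : ∀ j, n j = 0 → ρ j = 0)
    (hρ : Φ = C (Φ.eval 0) * Φs + ∑ j, C (ρ j) * (X * Φ' j))
    (Λ : Fin r → Polynomial ℂ)
    (hΛ : (n = 0 → Λ = 0) ∧ (n ≠ 0 → IsLambda μ n Λ))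
    (Λs : Fin r → Polynomial ℂ)
    (hΛs : (n = 0 → Λs = 0) ∧ (n ≠ 0 → IsLambdaStar μ n Λs))
    (Λp : Fin r → Fin r → Polynomial ℂ)
    (hΛp : ∀ j, IsLambda μ (eAdd n j) (Λp j)) :
    ∀ m, X * Λ m
      = -C ((starRingEnd ℂ) (Φs.coeff (∑ j, n j))) * Λs m
        + ∑ j, C ((starRingEnd ℂ) (ρ j)) * Λp j m := by
  intro m
  by_cases hn0 : n = 0
  · have hΛ0 : Λ = 0 := hΛ.1 hn0
    have hΛs0 : Λs = 0 := hΛs.1 hn0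
    have hρj : ∀ j, ρ j = 0 := fun j => hρ0 j (by rw [hn0]; rfl)
    simp [hΛ0, hΛs0, hρj]
  · have hprob : ∀ j, IsProbabilityMeasure (μ j) := fun j => (hμ j).1
    have hae : ∀ j, ∀ᵐ z ∂(μ j), ‖z‖ = 1 := fun j => ae_norm_one (hμ j).2.1
    set σn := ∑ j, n j with hσn
    have hσpos : 0 < σn := by
      rcases Nat.eq_zero_or_pos σn with h | h
      · exfalso
        apply hn0
        funext j
        have h2 : ∑ j, n j = 0 := by rw [← hσn]; exact h
        exact Finset.sum_eq_zero_iff.mp h2 j (Finset.mem_univ j)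
      · exact h
    obtain ⟨τ, hτ⟩ : ∃ τ, σn = τ + 1 := ⟨σn - 1, by omega⟩
    obtain ⟨⟨hΛne, hΛdeg, hΛorth⟩, hΛnorm⟩ := hΛ.2 hn0
    obtain ⟨⟨hΛsne, hΛsdeg, hΛsorth⟩, hΛsnorm⟩ := hΛs.2 hn0
    obtain ⟨⟨hΦne, hΦdeg, hΦorth⟩, hΦmonic, hΦnd⟩ := hΦ
    obtain ⟨⟨hΦsne, hΦsdeg, hΦsorth⟩, hΦs0⟩ := hΦs
    rw [← hσn] at hΛnorm hΛorth hΛsorth hΦdeg hΦnd hΦsdeg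
    have hΛnorm' : ∑ j, mip (μ j) (Λ j) τ = 1 := by
      rw [show τ = σn - 1 by omega]; exact hΛnorm
    -- facts about eAdd / eSub
    have heAdd_self : ∀ k, eAdd n k k = n k + 1 := fun k => Function.update_self k _ n
    have heAdd_ne : ∀ k j, j ≠ k → eAdd n k j = n j := fun k j h => Function.update_of_ne h _ n
    have heSub_self : ∀ k, eSub n k k = n k - 1 := fun k => Function.update_self k _ n
    have heSub_ne : ∀ k j, j ≠ k → eSub n k j = n j := fun k j h => Function.update_of_ne h _ n
    have heAdd_le : ∀ k j, eAdd n k j ≤ n j + 1 := by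
      intro k j
      rcases eq_or_ne j k with rfl | h
      · rw [heAdd_self]
      · rw [heAdd_ne k j h]; omega
    -- facts about Λp
    have hΛpdeg : ∀ k j, (Λp k j).degree < ((eAdd n k j : ℕ) : WithBot ℕ) :=
      fun k j => (hΛp k).1.2.1 j
    have hΛporth : ∀ k p, p + 2 ≤ σn + 1 → ∑ j, mip (μ j) (Λp k j) p = 0 := by
      intro k p hp
      exact (hΛp k).1.2.2 p (by rw [sum_eAdd, ← hσn]; omega)
    have hΛpnorm : ∀ k, ∑ j, mip (μ j) (Λp k j) σn = 1 := by
      intro k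
      have h := (hΛp k).2
      have e : (∑ i, eAdd n k i) - 1 = σn := by rw [sum_eAdd, ← hσn]; omega
      rwa [e] at h

    -- degree bounds
    have hdegXΛ : ∀ j, (X * Λ j).degree < ((n j + 1 : ℕ) : WithBot ℕ) :=
      fun j => degree_X_mul_lt (hΛdeg j)
    have hΦsdeg' : Φs.degree < ((σn + 1 : ℕ) : WithBot ℕ) :=
      lt_of_le_of_lt hΦsdeg (by exact_mod_cast Nat.lt_succ_self σn)
    have hΦdeg' : Φ.degree < ((σn + 1 : ℕ) : WithBot ℕ) :=
      lt_of_le_of_lt hΦdeg (by exact_mod_cast Nat.lt_succ_self σn)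
    -- shift fact
    have hF1 : ∀ p : ℕ, ∑ j, mip (μ j) (X * Λ j) (p + 1) = ∑ j, mip (μ j) (Λ j) p :=
      fun p => Finset.sum_congr rfl fun j _ => mip_X_mul (hae j) (Λ j) p
    -- ===== Fact 3 : ∑ mip (X*Λ) 0 = - conj β =====
    have hWayB : ∑ j, pip (μ j) Φs (X * Λ j) = 0 := by
      refine Finset.sum_eq_zero fun j _ => ?_
      rw [pip_expand_right (hprob j) (hae j) Φs (X * Λ j) (hdegXΛ j)]
      refine Finset.sum_eq_zero fun q hq => ?_
      rcases Nat.eq_zero_or_pos q with rfl | hq1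
      · simp [Polynomial.mul_coeff_zero]
      · rw [hΦsorth j q hq1 (by have := Finset.mem_range.mp hq; omega), mul_zero]
    have hWayA : ∑ j, pip (μ j) Φs (X * Λ j)
        = (starRingEnd ℂ) (∑ j, mip (μ j) (X * Λ j) 0) + Φs.coeff σn := by
      rw [Finset.sum_congr rfl fun j _ =>
        pip_expand_left (hprob j) (hae j) Φs (X * Λ j) hΦsdeg', Finset.sum_comm]
      rw [Finset.sum_congr rfl fun p _ =>
        show ∑ j, Φs.coeff p * (starRingEnd ℂ) (mip (μ j) (X * Λ j) p)
            = Φs.coeff p * (starRingEnd ℂ) (∑ j, mip (μ j) (X * Λ j) p) by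
          rw [map_sum, Finset.mul_sum]]
      rw [Finset.sum_range_succ]
      have hlast : Φs.coeff σn * (starRingEnd ℂ) (∑ j, mip (μ j) (X * Λ j) σn)
          = Φs.coeff σn := by
        rw [hτ, hF1 τ, hΛnorm', map_one, mul_one]
      rw [hlast]
      have hmid : ∑ p ∈ Finset.range σn,
          Φs.coeff p * (starRingEnd ℂ) (∑ j, mip (μ j) (X * Λ j) p)
          = (starRingEnd ℂ) (∑ j, mip (μ j) (X * Λ j) 0) := by
        rw [Finset.sum_eq_single_of_mem 0 (Finset.mem_range.mpr hσpos)]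
        · rw [Polynomial.coeff_zero_eq_eval_zero, hΦs0, one_mul]
        · intro p hp hp0
          obtain ⟨p', rfl⟩ : ∃ p', p = p' + 1 := ⟨p - 1, by omega⟩
          rw [hF1 p', hΛorth p' (by have := Finset.mem_range.mp hp; omega), map_zero, mul_zero]
      rw [hmid]
    have hFact3 : ∑ j, mip (μ j) (X * Λ j) 0 = -(starRingEnd ℂ) (Φs.coeff σn) := by
      have h0 : (starRingEnd ℂ) (∑ j, mip (μ j) (X * Λ j) 0) + Φs.coeff σn = 0 := by
        rw [← hWayA, hWayB]
      calc ∑ j, mip (μ j) (X * Λ j) 0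
          = (starRingEnd ℂ) ((starRingEnd ℂ) (∑ j, mip (μ j) (X * Λ j) 0)) :=
            (Complex.conj_conj _).symm
        _ = (starRingEnd ℂ) (-Φs.coeff σn) := by rw [show (starRingEnd ℂ)
              (∑ j, mip (μ j) (X * Λ j) 0) = -Φs.coeff σn by linear_combination h0]
        _ = -(starRingEnd ℂ) (Φs.coeff σn) := map_neg _ _
    -- ===== Fact 2 : top coefficients =====
    have hFact2 : ∀ k, (X * Λ k).coeff (n k)
        = (starRingEnd ℂ) (ρ k) * (Λp k k).coeff (n k) := by
      intro k
      by_cases hk : n k = 0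
      · rw [hρ0 k hk, map_zero, zero_mul, hk]
        simp [Polynomial.mul_coeff_zero]
      · obtain ⟨⟨hΦ'ne, hΦ'deg, hΦ'orth⟩, hΦ'monic, hΦ'nd⟩ := (hΦ' k).2 hk
        obtain ⟨d, hd⟩ : ∃ d, n k = d + 1 := ⟨n k - 1, by omega⟩
        have hΦ'ndτ : (Φ' k).natDegree = τ := by
          have := sum_eSub n k hk
          rw [← hσn] at this
          omega
        have hΦ'degσ : (Φ' k).degree < ((σn : ℕ) : WithBot ℕ) := by
          refine lt_of_le_of_lt (Polynomial.degree_le_natDegree) ?_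
          rw [hΦ'ndτ]
          exact_mod_cast (by omega : τ < σn)
        -- (***)
        have hA1 : ∑ j, pip (μ j) (Φ' k) (Λ j) = 1 := by
          rw [Finset.sum_congr rfl fun j _ =>
            pip_expand_left (hprob j) (hae j) (Φ' k) (Λ j) hΦ'degσ, Finset.sum_comm]
          rw [Finset.sum_congr rfl fun p _ =>
            show ∑ j, (Φ' k).coeff p * (starRingEnd ℂ) (mip (μ j) (Λ j) p)
                = (Φ' k).coeff p * (starRingEnd ℂ) (∑ j, mip (μ j) (Λ j) p) by
              rw [map_sum, Finset.mul_sum]]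
          rw [Finset.sum_eq_single_of_mem τ (Finset.mem_range.mpr (by omega))]
          · rw [hΛnorm', map_one, mul_one, ← hΦ'ndτ]
            exact hΦ'monic.coeff_natDegree
          · intro p hp hpτ
            rw [hΛorth p (by have := Finset.mem_range.mp hp; omega), map_zero, mul_zero]
        have hB1 : ∑ j, pip (μ j) (Φ' k) (Λ j)
            = (starRingEnd ℂ) ((Λ k).coeff d) * mip (μ k) (Φ' k) d := by
          rw [Finset.sum_congr rfl fun j _ =>
            pip_expand_right (hprob j) (hae j) (Φ' k) (Λ j) (hΛdeg j)]
          rw [Finset.sum_eq_single_of_mem k (Finset.mem_univ k)]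
          · rw [Finset.sum_eq_single_of_mem d (Finset.mem_range.mpr (by omega))]
            · intro q hq hqd
              rw [hΦ'orth k q (by rw [heSub_self]; have := Finset.mem_range.mp hq; omega),
                mul_zero]
          · intro j _ hjk
            refine Finset.sum_eq_zero fun q hq => ?_
            rw [hΦ'orth j q (by rw [heSub_ne k j hjk]; exact Finset.mem_range.mp hq), mul_zero]
        have hstar3 : (starRingEnd ℂ) ((Λ k).coeff d) * mip (μ k) (Φ' k) d = 1 := by
          rw [← hB1, hA1]
        -- (**)
        have hA2 : ∑ j, pip (μ j) Φ (Λp k j) = 1 := by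
          rw [Finset.sum_congr rfl fun j _ =>
            pip_expand_left (hprob j) (hae j) Φ (Λp k j) hΦdeg', Finset.sum_comm]
          rw [Finset.sum_congr rfl fun p _ =>
            show ∑ j, Φ.coeff p * (starRingEnd ℂ) (mip (μ j) (Λp k j) p)
                = Φ.coeff p * (starRingEnd ℂ) (∑ j, mip (μ j) (Λp k j) p) by
              rw [map_sum, Finset.mul_sum]]
          rw [Finset.sum_eq_single_of_mem σn (Finset.mem_range.mpr (by omega))]
          · rw [hΛpnorm k, map_one, mul_one, ← hΦnd]
            exact hΦmonic.coeff_natDegree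
          · intro p hp hpσ
            rw [hΛporth k p (by have := Finset.mem_range.mp hp; omega), map_zero, mul_zero]
        have hB2 : ∑ j, pip (μ j) Φ (Λp k j)
            = (starRingEnd ℂ) ((Λp k k).coeff (n k)) * mip (μ k) Φ (n k) := by
          rw [Finset.sum_congr rfl fun j _ =>
            pip_expand_right (hprob j) (hae j) Φ (Λp k j) (hΛpdeg k j)]
          rw [Finset.sum_eq_single_of_mem k (Finset.mem_univ k)]
          · rw [heAdd_self k]
            rw [Finset.sum_eq_single_of_mem (n k) (Finset.mem_range.mpr (by omega))]
            · intro q hq hqnk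
              rw [hΦorth k q (by have := Finset.mem_range.mp hq; omega), mul_zero]
          · intro j _ hjk
            refine Finset.sum_eq_zero fun q hq => ?_
            rw [hΦorth j q (by rw [← heAdd_ne k j hjk]; exact Finset.mem_range.mp hq), mul_zero]
        have hstar2 : (starRingEnd ℂ) ((Λp k k).coeff (n k)) * mip (μ k) Φ (n k) = 1 := by
          rw [← hB2, hA2]
        -- (*)
        have hstar1 : mip (μ k) Φ (n k) = ρ k * mip (μ k) (Φ' k) d := by
          have h0 : mip (μ k) Φ (n k)
              = mip (μ k) (C (Φ.eval 0) * Φs + ∑ j, C (ρ j) * (X * Φ' j)) (n k) := by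
            rw [← hρ]
          rw [h0, mip_add (hprob k) (hae k), mip_Cmul,
            hΦsorth k (n k) (by omega) le_rfl, mul_zero, zero_add,
            mip_sum (hprob k) (hae k)]
          rw [Finset.sum_congr rfl fun j _ => mip_Cmul (ρ j) (X * Φ' j) (n k)]
          rw [Finset.sum_eq_single_of_mem k (Finset.mem_univ k)]
          · rw [hd, mip_X_mul (hae k)]
          · intro j _ hjk
            by_cases hj : n j = 0
            · rw [hρ0 j hj, zero_mul]
            · obtain ⟨⟨_, _, hΦ'jorth⟩, _, _⟩ := (hΦ' j).2 hj
              rw [hd, mip_X_mul (hae k),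
                hΦ'jorth k d (by rw [heSub_ne j k (Ne.symm hjk)]; omega), mul_zero]
        have hκ0 : mip (μ k) (Φ' k) d ≠ 0 := by
          intro h
          rw [h, mul_zero] at hstar3
          exact one_ne_zero hstar3.symm
        have hkey : (starRingEnd ℂ) ((Λ k).coeff d)
            = ρ k * (starRingEnd ℂ) ((Λp k k).coeff (n k)) := by
          have h := hstar3.trans hstar2.symm
          rw [hstar1] at h
          apply mul_right_cancel₀ hκ0
          linear_combination h
        have hXc : (X * Λ k).coeff (n k) = (Λ k).coeff d := by
          rw [hd, Polynomial.coeff_X_mul]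
        rw [hXc]
        calc (Λ k).coeff d
            = (starRingEnd ℂ) ((starRingEnd ℂ) ((Λ k).coeff d)) := (Complex.conj_conj _).symm
          _ = (starRingEnd ℂ) (ρ k * (starRingEnd ℂ) ((Λp k k).coeff (n k))) := by rw [hkey]
          _ = (starRingEnd ℂ) (ρ k) * (Λp k k).coeff (n k) := by
              rw [map_mul, Complex.conj_conj]
    -- ===== the difference vector E =====
    set E : Fin r → Polynomial ℂ := fun k =>
      X * Λ k + C ((starRingEnd ℂ) (Φs.coeff σn)) * Λs k
        - ∑ j, C ((starRingEnd ℂ) (ρ j)) * Λp j k with hE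
    have hEcoeff : ∀ k q, (E k).coeff q
        = (X * Λ k).coeff q + (starRingEnd ℂ) (Φs.coeff σn) * (Λs k).coeff q
          - ∑ j, (starRingEnd ℂ) (ρ j) * (Λp j k).coeff q := by
      intro k q
      simp only [hE, Polynomial.coeff_sub, Polynomial.coeff_add, Polynomial.coeff_C_mul,
        Polynomial.finset_sum_coeff]
    have hdegE : ∀ k, (E k).degree < ((n k : ℕ) : WithBot ℕ) := by
      intro k
      rw [Polynomial.degree_lt_iff_coeff_zero]
      intro q hq
      have hq' : n k ≤ q := by exact_mod_cast hq
      rw [hEcoeff]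
      rcases eq_or_lt_of_le hq' with rfl | hqgt
      · rw [hFact2 k, coeff_zero_of_deg_lt (hΛsdeg k) le_rfl, mul_zero, add_zero]
        rw [Finset.sum_eq_single_of_mem k (Finset.mem_univ k)]
        · ring
        · intro j _ hjk
          rw [coeff_zero_of_deg_lt (hΛpdeg j k) (le_of_eq (heAdd_ne j k (Ne.symm hjk))),
            mul_zero]
      · obtain ⟨q', rfl⟩ : ∃ q', q = q' + 1 := ⟨q - 1, by omega⟩
        have h1 : (X * Λ k).coeff (q' + 1) = 0 := by
          rw [Polynomial.coeff_X_mul]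
          exact coeff_zero_of_deg_lt (hΛdeg k) (by omega)
        have h2 : (Λs k).coeff (q' + 1) = 0 := coeff_zero_of_deg_lt (hΛsdeg k) (by omega)
        rw [h1, h2, Finset.sum_congr rfl fun j _ => by
          rw [coeff_zero_of_deg_lt (hΛpdeg j k) (by have := heAdd_le j k; omega), mul_zero]]
        simp
    have hmipE : ∀ j p, mip (μ j) (E j) p
        = mip (μ j) (X * Λ j) p + (starRingEnd ℂ) (Φs.coeff σn) * mip (μ j) (Λs j) p
          - ∑ i, (starRingEnd ℂ) (ρ i) * mip (μ j) (Λp i j) p := by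
      intro j p
      simp only [hE]
      rw [mip_sub (hprob j) (hae j), mip_add (hprob j) (hae j), mip_Cmul,
        mip_sum (hprob j) (hae j)]
      rw [Finset.sum_congr rfl fun i _ => mip_Cmul _ _ _]
    have hmomE : ∀ p : ℕ, p < σn → ∑ j, mip (μ j) (E j) p = 0 := by
      intro p hp
      rw [Finset.sum_congr rfl fun j _ => hmipE j p]
      rw [Finset.sum_sub_distrib, Finset.sum_add_distrib, ← Finset.mul_sum]
      rw [Finset.sum_comm]
      rw [Finset.sum_congr rfl fun i (_ : i ∈ Finset.univ) => (Finset.mul_sum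
        Finset.univ (fun j => mip (μ j) (Λp i j) p) ((starRingEnd ℂ) (ρ i))).symm]
      rcases Nat.eq_zero_or_pos p with rfl | hp1
      · rw [hFact3, hΛsnorm, Finset.sum_congr rfl fun i (_ : i ∈ Finset.univ) => by
          rw [hΛporth i 0 (by omega), mul_zero]]
        simp
      · obtain ⟨p', rfl⟩ : ∃ p', p = p' + 1 := ⟨p - 1, by omega⟩
        rw [hF1 p', hΛorth p' (by omega), hΛsorth (p' + 1) (by omega) (by omega),
          Finset.sum_congr rfl fun i (_ : i ∈ Finset.univ) => by
            rw [hΛporth i (p' + 1) (by omega), mul_zero]]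
        simp
    have hEzero := type_zero hμ n hnorm E hdegE (fun p hp => hmomE p (by rw [hσn]; exact hp))
    have hEm := hEzero m
    simp only [hE] at hEm
    linear_combination hEm
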